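/- For real or complex s with the relevant Dirichlet series absolutely convergent, Σ_{x=1}^∞ N(x)·x^{-s} = ζ(s)·ζ(2s-1)/ζ(2s), where N(x) is the number of s' mod 2x with s'² ≡ 0 (mod 4x). -/

import Mathlib

/-!
If `x = a b²` with `a` squarefree, then `4x = a (2b)² ∣ s'²` iff `2ab ∣ s'`, so `N(x) = b`.
Summing over the bijection `(a, b) ↦ a b²` factors `∑ x⁻ˢ` as `(∑_{a squarefree} a⁻ˢ) ζ(2s)` and
`∑ N(x) x⁻ˢ` as `(∑_{a squarefree} a⁻ˢ) ∑ b · b⁻²ˢ = (∑_{a squarefree} a⁻ˢ) ζ(2s - 1)`;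
eliminating the squarefree series gives the identity.
-/

/-- `N(x)` = number of residues `s mod 2x` with `4x ∣ s²`. -/
def Ncount (x : ℕ) : ℕ :=
  ((Finset.range (2 * x)).filter (fun s => 4 * x ∣ s ^ 2)).card

open Finset

theorem Nat.mul_sq_dvd_sq_iff_of_squarefree {a b s : ℕ} (ha : Squarefree a) :
    a * b ^ 2 ∣ s ^ 2 ↔ a * b ∣ s := by
  refine ⟨fun h ↦ ?_, fun h ↦ ?_⟩
  · rcases eq_or_ne b 0 with rfl | hb
    · simpa using h
    obtain ⟨t, rfl⟩ : b ∣ s := (Nat.pow_dvd_pow_iff two_ne_zero).mp (dvd_of_mul_left_dvd h)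
    have hat : a ∣ t ^ 2 := by
      rw [mul_pow, mul_comm a] at h
      exact Nat.dvd_of_mul_dvd_mul_left (pow_pos (Nat.pos_of_ne_zero hb) 2) h
    rw [mul_comm a]
    exact mul_dvd_mul_left b ((ha.dvd_pow_iff_dvd two_ne_zero).mp hat)
  · calc a * b ^ 2 ∣ a * (a * b ^ 2) := dvd_mul_left _ _
      _ = (a * b) ^ 2 := by ring
      _ ∣ s ^ 2 := pow_dvd_pow_of_dvd h 2

-- `(a b)² = a (a b²)`, so each of `a b` and `a' b'` divides the other.
theorem Nat.eq_of_squarefree_mul_sq_eq {a b a' b' : ℕ} (ha : Squarefree a) (ha' : Squarefree a')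
    (hb : b ≠ 0) (h : a * b ^ 2 = a' * b' ^ 2) : a = a' ∧ b = b' := by
  have hab : a * b = a' * b' := by
    refine Nat.dvd_antisymm ((mul_sq_dvd_sq_iff_of_squarefree ha).mp ⟨a', ?_⟩)
      ((mul_sq_dvd_sq_iff_of_squarefree ha').mp ⟨a, ?_⟩)
    · rw [h]; ring
    · rw [← h]; ring
  have hab0 : a * b ≠ 0 := mul_ne_zero ha.ne_zero hb
  have hbb : b = b' := by
    refine Nat.eq_of_mul_eq_mul_left (Nat.pos_of_ne_zero hab0) ?_
    calc a * b * b = a * b ^ 2 := by ring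
      _ = a' * b' ^ 2 := h
      _ = a * b * b' := by rw [hab]; ring
  subst hbb
  exact ⟨Nat.eq_of_mul_eq_mul_right (Nat.pos_of_ne_zero hb) hab, rfl⟩

theorem Nat.card_filter_dvd_range_mul (k n : ℕ) (hk : k ≠ 0) :
    #{s ∈ range (k * n) | k ∣ s} = n := by
  have : {s ∈ range (k * n) | k ∣ s} = (range n).map ⟨(k * ·), mul_right_injective₀ hk⟩ := by
    ext s
    simp only [mem_filter, mem_range, mem_map, Function.Embedding.coeFn_mk]
    constructor
    · rintro ⟨hs, i, rfl⟩
      exact ⟨i, Nat.lt_of_mul_lt_mul_left hs, rfl⟩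
    · rintro ⟨i, hi, rfl⟩
      exact ⟨Nat.mul_lt_mul_of_pos_left hi (Nat.pos_of_ne_zero hk), dvd_mul_right k i⟩
  rw [this, card_map, card_range]

theorem Ncount_mul_sq {a : ℕ} (ha : Squarefree a) (b : ℕ) : Ncount (a * b ^ 2) = b := by
  rcases eq_or_ne b 0 with rfl | hb
  · simp [Ncount]
  have h4 : 4 * (a * b ^ 2) = a * (2 * b) ^ 2 := by ring
  simp_rw [Ncount, h4, Nat.mul_sq_dvd_sq_iff_of_squarefree ha]
  rw [show 2 * (a * b ^ 2) = a * (2 * b) * b by ring]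
  exact Nat.card_filter_dvd_range_mul _ _ (mul_ne_zero ha.ne_zero (by omega))

theorem PNat.bijective_squarefree_mul_sq :
    Function.Bijective fun p : {a : ℕ+ // Squarefree (a : ℕ)} × ℕ+ ↦ (p.1 : ℕ+) * p.2 ^ 2 := by
  refine ⟨fun ⟨⟨a, ha⟩, b⟩ ⟨⟨a', ha'⟩, b'⟩ h ↦ ?_, fun n ↦ ?_⟩
  · have h' : (a : ℕ) * b ^ 2 = a' * b' ^ 2 := by exact_mod_cast congrArg PNat.val h
    obtain ⟨haa, hbb⟩ := Nat.eq_of_squarefree_mul_sq_eq ha ha' b.ne_zero h'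
    obtain rfl : a = a' := PNat.coe_injective haa
    obtain rfl : b = b' := PNat.coe_injective hbb
    rfl
  · obtain ⟨a, b, ha, hb, hn, hsq⟩ := Nat.sq_mul_squarefree_of_pos n.pos
    refine ⟨⟨⟨⟨a, ha⟩, hsq⟩, ⟨b, hb⟩⟩, PNat.eq ?_⟩
    rw [PNat.mul_coe, PNat.pow_coe, PNat.mk_coe, PNat.mk_coe, ← hn, mul_comm]

noncomputable def PNat.squarefreeMulSqEquiv : {a : ℕ+ // Squarefree (a : ℕ)} × ℕ+ ≃ ℕ+ :=
  Equiv.ofBijective _ bijective_squarefree_mul_sq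

theorem Complex.natCast_mul_sq_cpow (a b : ℕ) (w : ℂ) :
    ((a * b ^ 2 : ℕ) : ℂ) ^ w = (a : ℂ) ^ w * (b : ℂ) ^ (2 * w) := by
  rw [Nat.cast_mul, natCast_mul_natCast_cpow, show 2 * w = ((2 : ℕ) : ℂ) * w by norm_num,
    natCast_cpow_natCast_mul, Nat.cast_pow]

theorem riemannZeta_eq_tsum_pnat {w : ℂ} (hw : 1 < w.re) :
    riemannZeta w = ∑' n : ℕ+, 1 / (n : ℂ) ^ w := by
  rw [zeta_eq_tsum_one_div_nat_add_one_cpow hw,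
    tsum_pnat_eq_tsum_succ (f := fun n : ℕ ↦ 1 / (n : ℂ) ^ w)]
  simp

theorem summable_norm_one_div_pnat_cpow {w : ℂ} (hw : 1 < w.re) :
    Summable fun n : ℕ+ ↦ ‖1 / (n : ℂ) ^ w‖ :=
  (summable_norm_iff.mpr (Complex.summable_one_div_nat_cpow.mpr hw)).comp_injective
    PNat.coe_injective

theorem tsum_div_cpow_eq_of_apply_squarefree_mul_sq {f : ℕ → ℂ} {φ : ℕ+ → ℂ} {w : ℂ}
    (hw : 1 < w.re) (hf : ∀ (a : ℕ) (b : ℕ+), Squarefree a → f (a * b ^ 2) = φ b)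
    (hφ : Summable fun b : ℕ+ ↦ ‖φ b / (b : ℂ) ^ (2 * w)‖) :
    ∑' n : ℕ+, f n / (n : ℂ) ^ w =
      (∑' a : {a : ℕ+ // Squarefree (a : ℕ)}, 1 / (a : ℂ) ^ w) *
        ∑' b : ℕ+, φ b / (b : ℂ) ^ (2 * w) := by
  rw [tsum_mul_tsum_of_summable_norm
    ((summable_norm_one_div_pnat_cpow hw).comp_injective Subtype.val_injective) hφ,
    ← PNat.squarefreeMulSqEquiv.tsum_eq]
  refine tsum_congr fun ⟨⟨a, ha⟩, b⟩ ↦ ?_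
  have hcast : ((PNat.squarefreeMulSqEquiv (⟨a, ha⟩, b) : ℕ+) : ℕ) = a * b ^ 2 := rfl
  simp only [hcast, hf _ _ ha, Complex.natCast_mul_sq_cpow]
  ring

theorem dirichlet_series_Ncount (s : ℝ) (hs : 3 / 2 < s) :
    ∑' x : ℕ+, (Ncount x : ℂ) / (x : ℂ) ^ (s : ℂ) =
      riemannZeta s * riemannZeta (2 * s - 1) / riemannZeta (2 * s) := by
  have hs₁ : 1 < (s : ℂ).re := by simp; linarith
  have hs₂ : 1 < (2 * s : ℂ).re := by simp; linarith
  have hs₃ : 1 < (2 * s - 1 : ℂ).re := by simp; linarith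
  have hdiv (b : ℕ+) : (b : ℂ) / (b : ℂ) ^ (2 * (s : ℂ)) = 1 / (b : ℂ) ^ (2 * (s : ℂ) - 1) := by
    rw [Complex.cpow_sub _ _ (by simp), Complex.cpow_one]
    field_simp
  set A := ∑' a : {a : ℕ+ // Squarefree (a : ℕ)}, 1 / (a : ℂ) ^ (s : ℂ)
  have hζ : riemannZeta s = A * riemannZeta (2 * s) := by
    rw [riemannZeta_eq_tsum_pnat hs₁, riemannZeta_eq_tsum_pnat hs₂]
    exact tsum_div_cpow_eq_of_apply_squarefree_mul_sq (f := 1) (φ := 1) hs₁ (fun _ _ _ ↦ rfl)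
      (summable_norm_one_div_pnat_cpow hs₂)
  have hN : ∑' x : ℕ+, (Ncount x : ℂ) / (x : ℂ) ^ (s : ℂ) = A * riemannZeta (2 * s - 1) := by
    rw [riemannZeta_eq_tsum_pnat hs₃]
    simp only [← hdiv]
    refine tsum_div_cpow_eq_of_apply_squarefree_mul_sq (f := fun n ↦ Ncount n) (φ := fun b ↦ b)
      hs₁ (fun a b ha ↦ ?_) ?_
    · simp [Ncount_mul_sq ha]
    · simpa only [hdiv] using summable_norm_one_div_pnat_cpow hs₃
  rw [hN, hζ, mul_right_comm, mul_div_cancel_right₀ _ (riemannZeta_ne_zero_of_one_lt_re hs₂)]
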